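/- arXiv:2311.10178 — 4 statements merged into one kernel-verified Lean document; each statement's English description precedes it below -/
import Mathlib

section
/- Let n ≥ 1 and let H be an abstract n-hammock in an n-clat ∏_{i∈[n]} L_i. Any subset of H all of whose projections π_i are scattered linear orders is a scattered poset. Moreover, a box X in H is scattered if and only if every projection π_i(X) is a scattered linear order. -/
universe u v

attribute [local instance] Classical.propDecidable

noncomputable section

namespace PaperHam

/-- The `i`-th projection of a set of tuples. -/
def proj {n : ℕ} {L : Fin n → Type u} (i : Fin n) (S : Set (∀ i, L i)) : Set (L i) :=
  (fun x => x i) '' S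

/-- The set of strict lower bounds of `A` within the ambient carrier `K`. -/
def lowerStrictIn {α : Type u} [LT α] (K A : Set α) : Set α := {b ∈ K | ∀ a ∈ A, b < a}

/-- The set of strict upper bounds of `A` within the ambient carrier `K`. -/
def upperStrictIn {α : Type u} [LT α] (K A : Set α) : Set α := {b ∈ K | ∀ a ∈ A, a < b}

/-- A sub-`n`-clat: a set of tuples coinciding with the product of its projections. -/
def IsSubClat {n : ℕ} {L : Fin n → Type u} (S : Set (∀ i, L i)) : Prop :=
  S = Set.pi Set.univ fun i => proj i S

/-- `H` is an abstract `n`-hammock in the `n`-clat `∏ K i`. -/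
def IsHammockIn {n : ℕ} {L : Fin n → Type u} [∀ i, LinearOrder (L i)]
    (K : ∀ i, Set (L i)) (H : Set (∀ i, L i)) : Prop :=
  ∃ (k : ℕ) (S : Fin (k + 1) → Set (∀ i, L i)),
    (∀ j, IsSubClat (S j)) ∧
    H = ⋃ j, S j ∧
    (∀ i, proj i H = K i) ∧
    (∀ i, (proj i (S 0) ∩ proj i (S (Fin.last k))).Nonempty) ∧
    ∀ (j : Fin k) (i : Fin n),
      lowerStrictIn (K i) (proj i (S j.castSucc)) ∩ proj i (S j.succ) = ∅ ∧
      upperStrictIn (K i) (proj i (S j.castSucc)) ∩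
        lowerStrictIn (K i) (proj i (S j.succ)) = ∅ ∧
      proj i (S j.castSucc) ∩ upperStrictIn (K i) (proj i (S j.succ)) = ∅

/-- `H` is an abstract `n`-hammock in the full `n`-clat `∏ i, L i`. -/
def IsHammock {n : ℕ} {L : Fin n → Type u} [∀ i, LinearOrder (L i)]
    (H : Set (∀ i, L i)) : Prop :=
  IsHammockIn (fun _ => Set.univ) H

/-- A subset of a (pre)ordered type is scattered if it contains no copy of `ℚ`. -/
def IsScatteredSet {α : Type*} [Preorder α] (A : Set α) : Prop :=
  ¬ ∃ f : ℚ → α, StrictMono f ∧ ∀ q, f q ∈ A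

/-- An order is scattered if `ℚ` does not order-embed into it. -/
def IsScatteredOrder (α : Type*) [Preorder α] : Prop :=
  ¬ ∃ f : ℚ → α, StrictMono f

/-- A box in a hammock `H`. -/
def IsBox {n : ℕ} {L : Fin n → Type u} [∀ i, LinearOrder (L i)]
    (H X : Set (∀ i, L i)) : Prop :=
  (∀ i, (proj i X).OrdConnected) ∧ X = H ∩ Set.pi Set.univ fun i => proj i X

/-- A maximal scattered box in `H`. -/
def IsMSB {n : ℕ} {L : Fin n → Type u} [∀ i, LinearOrder (L i)]
    (H X : Set (∀ i, L i)) : Prop :=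
  IsBox H X ∧ IsScatteredSet X ∧ ∀ Y, IsBox H Y → IsScatteredSet Y → X ⊆ Y → Y = X

/-- The scattered condensation class of `x` in the hammock `H`. -/
def condClass {n : ℕ} {L : Fin n → Type u} [∀ i, LinearOrder (L i)]
    (H : Set (∀ i, L i)) (x : ∀ i, L i) : Set (∀ i, L i) :=
  {y ∈ H | IsScatteredSet (H ∩ Set.uIcc x y)}

/-- The scattered condensation class of `x` in a linear order. -/
def condClassLin {α : Type*} [LinearOrder α] (x : α) : Set α :=
  {y | IsScatteredSet (Set.uIcc x y)}

/-- The Hausdorff condensation relation `∼_o` on a linear order. -/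
def hrEquiv {α : Type u} [LinearOrder α] (o : Ordinal.{v}) : α → α → Prop :=
  Ordinal.limitRecOn (motive := fun _ => α → α → Prop) o (fun x y => x = y)
    (fun _ R x y => {s : Set α | ∃ z ∈ Set.uIcc x y, s = {w ∈ Set.uIcc x y | R z w}}.Finite)
    (fun o _ ih x y => ∃ β, ∃ hβ : β < o, ih β hβ x y)

/-- The set of `∼_o`-classes of the linear order `α`. -/
def hrClasses (α : Type u) [LinearOrder α] (o : Ordinal.{u}) : Set (Set α) :=
  {s | ∃ z : α, s = {w | hrEquiv o z w}}

/-- The Hausdorff rank of a linear order: the least ordinal `o` with `α/∼_o` finite,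
`⊤ = ∞` if there is none. -/
def HRrank (α : Type u) [LinearOrder α] : WithTop Ordinal.{u} :=
  if _ : ∃ o : Ordinal.{u}, (hrClasses α o).Finite then
    ((sInf {o : Ordinal.{u} | (hrClasses α o).Finite} : Ordinal.{u}) : WithTop Ordinal.{u})
  else ⊤

/-- The density of a linear order, valued in `{-1} ∪ Ordinal ∪ {∞}`,
encoded as `WithBot (WithTop Ordinal)` (with `⊥ = -1` and `⊤ = ∞`). -/
def density (α : Type u) [LinearOrder α] : WithBot (WithTop Ordinal.{u}) :=
  if _ : ∃ o : Ordinal.{u}, (hrClasses α o).Finite then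
    if Nonempty α then
      (((Ordinal.omega0.{u} * sInf {o : Ordinal.{u} | (hrClasses α o).Finite} +
          (((hrClasses α (sInf {o : Ordinal.{u} | (hrClasses α o).Finite})).ncard - 1 : ℕ) :
            Ordinal.{u}) : Ordinal.{u}) : WithTop Ordinal.{u}) : WithBot (WithTop Ordinal.{u}))
    else ⊥
  else ((⊤ : WithTop Ordinal.{u}) : WithBot (WithTop Ordinal.{u}))

/-- The Hausdorff rank attached to a density value: `∞` if the density is `∞`, and
otherwise the unique ordinal `a` such that the density is `ω·a + p` with `p < ω`. -/
def rankOfDensity (d : WithBot (WithTop Ordinal.{u})) : WithTop Ordinal.{u} :=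
  if h : ∃ o : Ordinal.{u}, d = ((o : WithTop Ordinal.{u}) : WithBot (WithTop Ordinal.{u})) then
    ((h.choose / Ordinal.omega0.{u} : Ordinal.{u}) : WithTop Ordinal.{u})
  else ⊤

/-- A chain in a partial order is linearly ordered. -/
def chainLinearOrder {P : Type u} [PartialOrder P] {A : Set P}
    (h : IsChain (· ≤ ·) A) : LinearOrder ↥A :=
  { (inferInstance : PartialOrder ↥A) with
    le_total := fun a b => by
      rcases eq_or_ne (a : P) (b : P) with hab | hab
      · exact Or.inl (le_of_eq (Subtype.ext hab))
      · exact (h a.2 b.2 hab).imp Subtype.coe_le_coe.mp Subtype.coe_le_coe.mp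
    toDecidableLE := Classical.decRel _ }

/-- The density of a chain in a partial order. -/
def chainDensity {P : Type u} [PartialOrder P] (A : Set P) (h : IsChain (· ≤ ·) A) :
    WithBot (WithTop Ordinal.{u}) :=
  @density ↥A (chainLinearOrder h)

/-- The density of a subset of a partial order: the supremum of the densities of its
chains having a maximum and a minimum. -/
def posetDensitySet {P : Type u} [PartialOrder P] (X : Set P) :
    WithBot (WithTop Ordinal.{u}) :=
  sSup {d | ∃ (A : Set P) (h : IsChain (· ≤ ·) A), A ⊆ X ∧
    (∃ m ∈ A, ∀ a ∈ A, a ≤ m) ∧ (∃ m ∈ A, ∀ a ∈ A, m ≤ a) ∧ d = chainDensity A h}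

/-- A linear order is discrete if every non-maximal element has an immediate successor and
every non-minimal element has an immediate predecessor. -/
def IsDiscreteOrder (α : Type*) [LinearOrder α] : Prop :=
  (∀ x : α, (∃ y, x < y) → ∃ y, x ⋖ y) ∧ ∀ x : α, (∃ y, y < x) → ∃ y, y ⋖ x

/-- `A` is an initial segment (prefix) of `B`. -/
def IsLowerWithin {α : Type*} [Preorder α] (A B : Set α) : Prop :=
  A ⊆ B ∧ ∀ a ∈ A, ∀ b ∈ B, b ≤ a → b ∈ A

/-- `A` is a final segment (suffix) of `B`. -/
def IsUpperWithin {α : Type*} [Preorder α] (A B : Set α) : Prop :=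
  A ⊆ B ∧ ∀ a ∈ A, ∀ b ∈ B, a ≤ b → b ∈ A

/-- A bottom corner of the hammock `H`: a box of `H` which is an `n`-clat such that each
projection is a prefix of the corresponding projection of `H` order-isomorphic to
`L' · ω*` (i.e. `Lex (ℕᵒᵈ × L')`) for some linear order `L'`. -/
def IsBottomCorner {n : ℕ} {L : Fin n → Type u} [∀ i, LinearOrder (L i)]
    (H F : Set (∀ i, L i)) : Prop :=
  IsBox H F ∧ IsSubClat F ∧
    ∀ i, IsLowerWithin (proj i F) (proj i H) ∧
      ∃ (β : Type u) (_ : LinearOrder β), Nonempty (↥(proj i F) ≃o Lex (ℕᵒᵈ × β))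

/-- A top corner of the hammock `H`: a box of `H` which is an `n`-clat such that each
projection is a suffix of the corresponding projection of `H` order-isomorphic to
`L' · ω` (i.e. `Lex (ℕ × L')`) for some linear order `L'`. -/
def IsTopCorner {n : ℕ} {L : Fin n → Type u} [∀ i, LinearOrder (L i)]
    (H F : Set (∀ i, L i)) : Prop :=
  IsBox H F ∧ IsSubClat F ∧
    ∀ i, IsUpperWithin (proj i F) (proj i H) ∧
      ∃ (β : Type u) (_ : LinearOrder β), Nonempty (↥(proj i F) ≃o Lex (ℕ × β))

/-- `W` is the dot sum `A ∔ B ∔ C` of the three subsets `A`, `B`, `C` of a linear order: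
the union is `W`, the maximum of `A` is the minimum of `B`, and the maximum of `B` is the
minimum of `C`. -/
def TripleDotSumEq {α : Type*} [LinearOrder α] (A B C W : Set α) : Prop :=
  W = A ∪ B ∪ C ∧ (∃ x, IsGreatest A x ∧ IsLeast B x) ∧ ∃ y, IsGreatest B y ∧ IsLeast C y

/-- A corner decomposition `(F₋, H₀, F₊)` of the hammock `H`. -/
def IsCornerDecomp {n : ℕ} {L : Fin n → Type u} [∀ i, LinearOrder (L i)]
    (H Fm H0 Fp : Set (∀ i, L i)) : Prop :=
  IsBottomCorner H Fm ∧ IsTopCorner H Fp ∧ H0 ⊆ H ∧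
    IsHammockIn (fun i => proj i H0) H0 ∧
    (∀ i, (∃ m, IsGreatest (proj i H0) m) ∧ ∃ m, IsLeast (proj i H0) m) ∧
    ∀ i, TripleDotSumEq (proj i Fm) (proj i H0) (proj i Fp) (proj i H)

/-- The carrier of the `n`-fold dot sum `L 0 ∔ L 1 ∔ ⋯ ∔ L (n-1)` inside the lexicographic
sigma type: one removes the minimum of `L i` whenever the dot sum of the preceding
components has a maximum (these two points being identified). -/
def dotSumCarrier {n : ℕ} (L : Fin n → Type u) [∀ i, LinearOrder (L i)] :
    Set (Lex (Σ i, L i)) :=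
  {x | ¬ ((∀ b : L (ofLex x).1, (ofLex x).2 ≤ b) ∧
      ∃ j < (ofLex x).1, (∃ m : L j, ∀ b : L j, b ≤ m) ∧
        ∀ k : Fin n, j < k → k < (ofLex x).1 → IsEmpty (L k))}

/-- The carrier of the binary dot sum `α ∔ β` inside `Lex (α ⊕ β)`: the minimum of `β` is
removed (being identified with the maximum of `α`) whenever both exist. -/
def dotCarrier (α β : Type u) [LinearOrder α] [LinearOrder β] : Set (Lex (α ⊕ β)) :=
  {x | ¬ ((∃ m : α, ∀ a : α, a ≤ m) ∧
      ∃ b : β, (∀ b' : β, b ≤ b') ∧ x = toLex (Sum.inr b))}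

/-- The binary dot sum `α ∔ β` of two linear orders. -/
abbrev DotSum (α β : Type u) [LinearOrder α] [LinearOrder β] : Type u := ↥(dotCarrier α β)

/-- The class `LO_fp` of finitely presented linear orders: the smallest class of linear
orders containing the empty and one-element orders, closed under order isomorphism and
under the operations `L ↦ ω·L`, `L ↦ ω*·L` and `(L₁, L₂) ↦ L₁ + L₂`. -/
inductive IsFinPresLO : ∀ (α : Type u), LinearOrder α → Prop
  | subsingleton (α : Type u) [inst : LinearOrder α] (h : Subsingleton α) :
      IsFinPresLO α inst
  | omegaMul (α : Type u) [inst : LinearOrder α] (h : IsFinPresLO α inst) :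
      IsFinPresLO (Lex (α × ℕ)) inferInstance
  | omegaStarMul (α : Type u) [inst : LinearOrder α] (h : IsFinPresLO α inst) :
      IsFinPresLO (Lex (α × ℕᵒᵈ)) inferInstance
  | sum (α β : Type u) [instα : LinearOrder α] [instβ : LinearOrder β]
      (hα : IsFinPresLO α instα) (hβ : IsFinPresLO β instβ) :
      IsFinPresLO (Lex (α ⊕ β)) inferInstance
  | iso (α β : Type u) [instα : LinearOrder α] [instβ : LinearOrder β]
      (hα : IsFinPresLO α instα) (e : α ≃o β) : IsFinPresLO β instβ




/-- If `D` is dense in the rational interval `(a,b)`, there is a strictly monotone map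
`ℚ → ℚ` with values in `D ∩ Ioo a b`. -/
lemma dense_embed {D : Set ℚ} {a b : ℚ} (hab : a < b)
    (hd : ∀ x y, a ≤ x → y ≤ b → x < y → (Set.Ioo x y ∩ D).Nonempty) :
    ∃ e : ℚ → ℚ, StrictMono e ∧ ∀ q, e q ∈ D ∩ Set.Ioo a b := by
  set T : Set ℚ := D ∩ Set.Ioo a b with hT
  have hmem : ∀ x y, a ≤ x → y ≤ b → x < y → ∃ t ∈ T, x < t ∧ t < y := by
    intro x y hx hy hxy
    obtain ⟨t, ⟨ht1, ht2⟩, htD⟩ := hd x y hx hy hxy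
    exact ⟨t, ⟨htD, lt_of_le_of_lt hx ht1, lt_of_lt_of_le ht2 hy⟩, ht1, ht2⟩
  have hne : Nonempty ↥T := by
    obtain ⟨t, ht, _⟩ := hmem a b le_rfl le_rfl hab
    exact ⟨⟨t, ht⟩⟩
  have hdo : DenselyOrdered ↥T := by
    constructor
    rintro ⟨x, hxD, hx⟩ ⟨y, hyD, hy⟩ hxy
    obtain ⟨t, ht, h1, h2⟩ := hmem x y hx.1.le hy.2.le (Subtype.mk_lt_mk.mp hxy)
    exact ⟨⟨t, ht⟩, Subtype.mk_lt_mk.mpr h1, Subtype.mk_lt_mk.mpr h2⟩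
  have hmin : NoMinOrder ↥T := by
    constructor
    rintro ⟨x, hxD, hx⟩
    obtain ⟨t, ht, _, h2⟩ := hmem a x le_rfl hx.2.le hx.1
    exact ⟨⟨t, ht⟩, Subtype.mk_lt_mk.mpr h2⟩
  have hmax : NoMaxOrder ↥T := by
    constructor
    rintro ⟨x, hxD, hx⟩
    obtain ⟨t, ht, h1, _⟩ := hmem x b hx.1.le le_rfl hx.2
    exact ⟨⟨t, ht⟩, Subtype.mk_lt_mk.mpr h1⟩
  obtain ⟨e⟩ := Order.iso_of_countable_dense ℚ ↥T
  exact ⟨fun q => (e q : ℚ), fun q r hqr => Subtype.coe_lt_coe.mpr (e.strictMono hqr),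
    fun q => (e q).2⟩

/-- Finite cover lemma for ℚ. -/
lemma rat_cover : ∀ (m : ℕ) (C : Fin m → Set ℚ), (∀ q, ∃ j, q ∈ C j) →
    ∃ j, ∃ e : ℚ → ℚ, StrictMono e ∧ ∀ q, e q ∈ C j := by
  intro m
  induction m with
  | zero => intro C hcov; exact absurd (hcov 0) (by simp [Fin.isEmpty'.false])
  | succ m ih =>
    intro C hcov
    set D := C (Fin.last m) with hD
    by_cases h : ∃ a b : ℚ, a < b ∧ ∀ x y, a ≤ x → y ≤ b → x < y → (Set.Ioo x y ∩ D).Nonempty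
    · obtain ⟨a, b, hab, hd⟩ := h
      obtain ⟨e, he, hmem⟩ := dense_embed hab hd
      exact ⟨Fin.last m, e, he, fun q => (hmem q).1⟩
    · push_neg at h
      obtain ⟨x, y, hx, hy, hxy, hempty⟩ := h 0 1 one_pos
      obtain ⟨e0, he0, hmem0⟩ := dense_embed (D := Set.univ) hxy
        (fun u v _ _ huv => by
          obtain ⟨t, h1, h2⟩ := exists_between huv
          exact ⟨t, ⟨h1, h2⟩, trivial⟩)
      have hnotD : ∀ q, e0 q ∉ D := by
        intro q hq
        have : e0 q ∈ Set.Ioo x y ∩ D := ⟨(hmem0 q).2, hq⟩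
        rw [hempty] at this
        exact this
      obtain ⟨j, e1, he1, hmem1⟩ := ih (fun j => e0 ⁻¹' C j.castSucc) (by
        intro q
        obtain ⟨j, hj⟩ := hcov (e0 q)
        have hjne : j ≠ Fin.last m := by rintro rfl; exact hnotD q hj
        obtain ⟨j', rfl⟩ := Fin.exists_castSucc_eq.mpr hjne
        exact ⟨j', hj⟩)
      exact ⟨j.castSucc, e0 ∘ e1, he0.comp he1, hmem1⟩

/-- Key coordinate lemma. -/
lemma coord_lemma {n : ℕ} {L : Fin n → Type*} [∀ i, LinearOrder (L i)] :
    ∀ (s : Finset (Fin n)) (f : ℚ → ∀ i, L i),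
      (∀ q r : ℚ, q ≤ r → ∀ i ∈ s, f q i ≤ f r i) →
      (∀ q r : ℚ, q < r → ∃ i ∈ s, f q i ≠ f r i) →
      ∃ i ∈ s, ∃ e : ℚ → ℚ, StrictMono e ∧ StrictMono fun q => f (e q) i := by
  intro s
  induction s using Finset.induction_on with
  | empty =>
    intro f _ hsep
    obtain ⟨i, hi, _⟩ := hsep 0 1 one_pos
    exact absurd hi (by simp)
  | @insert i s hi ih =>
    intro f hmono hsep
    by_cases hconst : ∃ a b : ℚ, a < b ∧ f a i = f b i
    · obtain ⟨a, b, hab, hfab⟩ := hconst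
      obtain ⟨e0, he0, hmem0⟩ := dense_embed (D := Set.univ) hab
        (fun u v _ _ huv => by
          obtain ⟨t, h1, h2⟩ := exists_between huv
          exact ⟨t, ⟨h1, h2⟩, trivial⟩)
      have hconst' : ∀ q, f (e0 q) i = f a i := by
        intro q
        have h1 : f a i ≤ f (e0 q) i :=
          hmono a (e0 q) (hmem0 q).2.1.le i (Finset.mem_insert_self i s)
        have h2 : f (e0 q) i ≤ f b i :=
          hmono (e0 q) b (hmem0 q).2.2.le i (Finset.mem_insert_self i s)
        exact le_antisymm (hfab ▸ h2) h1
      obtain ⟨j, hj, e1, he1, hsm⟩ := ih (fun q => f (e0 q))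
        (fun q r hqr j hj => hmono _ _ (he0.monotone hqr) j (Finset.mem_insert_of_mem hj))
        (by
          intro q r hqr
          obtain ⟨j, hj, hne⟩ := hsep (e0 q) (e0 r) (he0 hqr)
          rcases Finset.mem_insert.mp hj with rfl | hj'
          · exact absurd ((hconst' q).trans (hconst' r).symm) hne
          · exact ⟨j, hj', hne⟩)
      exact ⟨j, Finset.mem_insert_of_mem hj, e0 ∘ e1, he0.comp he1, hsm⟩
    · push_neg at hconst
      refine ⟨i, Finset.mem_insert_self i s, id, strictMono_id, fun q r hqr => ?_⟩
      exact lt_of_le_of_ne (hmono q r hqr.le i (Finset.mem_insert_self i s)) (hconst q r hqr)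


/-- Part 1. -/
lemma part1 {n : ℕ} {L : Fin n → Type u} [∀ i, LinearOrder (L i)]
    (A : Set (∀ i, L i)) (hscat : ∀ i, IsScatteredSet (proj i A)) : IsScatteredSet A := by
  rintro ⟨f, hf, hmem⟩
  obtain ⟨i, -, e, he, hsm⟩ := coord_lemma Finset.univ f
    (fun q r hqr i _ => hf.monotone hqr i)
    (by
      intro q r hqr
      by_contra hcon
      push_neg at hcon
      exact (hf hqr).ne (funext fun i => hcon i (Finset.mem_univ i)))
  exact hscat i ⟨fun q => f (e q) i, hsm, fun q => ⟨f (e q), hmem (e q), rfl⟩⟩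

/-- Part 2 forward direction. -/
lemma part2 {n : ℕ} {L : Fin n → Type u} [∀ i, LinearOrder (L i)] {k : ℕ}
    {S : Fin (k + 1) → Set (∀ i, L i)} (hsub : ∀ j, IsSubClat (S j))
    {X : Set (∀ i, L i)} (hX : X = (⋃ j, S j) ∩ Set.pi Set.univ fun i => proj i X)
    (hXscat : IsScatteredSet X) (i : Fin n) : IsScatteredSet (proj i X) := by
  rintro ⟨f, hf, hmem⟩
  set T : Fin (k + 1) → Set (∀ i, L i) :=
    fun j => S j ∩ Set.pi Set.univ fun i' => proj i' X with hT
  have hTX : ∀ j, T j ⊆ X := by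
    intro j x hx
    rw [hX]
    exact ⟨Set.mem_iUnion.mpr ⟨j, hx.1⟩, hx.2⟩
  have hXU : X = ⋃ j, T j := by
    rw [hX, Set.iUnion_inter]
  obtain ⟨j, e, he, hmem'⟩ := rat_cover (k + 1) (fun j => {q | f q ∈ proj i (T j)}) (by
    intro q
    have : f q ∈ proj i (⋃ j, T j) := hXU ▸ hmem q
    rw [proj, Set.image_iUnion] at this
    obtain ⟨j', hj'⟩ := Set.mem_iUnion.mp this
    exact ⟨j', hj'⟩)
  set g : ℚ → L i := fun q => f (e q) with hg
  have hgm : ∀ q, g q ∈ proj i (T j) := hmem'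
  obtain ⟨x0, hx0, hx0i⟩ := hgm 0
  have hTj : ∀ x : ∀ i', L i', (∀ i', x i' ∈ proj i' (T j)) → x ∈ T j := by
    intro x hx
    constructor
    · have := hsub j
      rw [IsSubClat] at this
      rw [this]
      intro i' _
      obtain ⟨y, hy, hyi⟩ := hx i'
      exact ⟨y, hy.1, hyi⟩
    · intro i' _
      obtain ⟨y, hy, hyi⟩ := hx i'
      exact ⟨y, hTX j hy, hyi⟩
  set h : ℚ → ∀ i', L i' := fun q => Function.update x0 i (g q) with hh
  have hhmem : ∀ q, h q ∈ X := by
    intro q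
    refine hTX j (hTj _ fun i' => ?_)
    rcases eq_or_ne i' i with rfl | hne
    · simpa [hh] using hgm q
    · rw [hh]
      simp only [Function.update_of_ne hne]
      exact ⟨x0, hx0, rfl⟩
  refine hXscat ⟨h, fun q r hqr => ?_, hhmem⟩
  have hgqr : g q < g r := hf (he hqr)
  rw [lt_iff_le_and_ne]
  constructor
  · intro i'
    rcases eq_or_ne i' i with rfl | hne
    · simpa [hh] using hgqr.le
    · simp [hh, Function.update_of_ne hne]
  · intro hcon
    have := congrFun hcon i
    simp only [hh, Function.update_self] at this
    exact hgqr.ne this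


/-- any subset of an abstract `n`-hammock all of whose projections are
scattered is scattered; and a box is scattered iff all its projections are scattered. -/
theorem statement2 {n : ℕ} (hn : 1 ≤ n) {L : Fin n → Type u} [∀ i, LinearOrder (L i)]
    {H : Set (∀ i, L i)} (hH : IsHammock H) :
    (∀ A : Set (∀ i, L i), A ⊆ H → (∀ i, IsScatteredSet (proj i A)) → IsScatteredSet A) ∧
      ∀ X : Set (∀ i, L i), IsBox H X →
        (IsScatteredSet X ↔ ∀ i, IsScatteredSet (proj i X)) := by
  obtain ⟨k, S, hsub, hU, -, -, -⟩ := hH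
  constructor
  · intro A _ hscat
    exact part1 A hscat
  · intro X hbox
    have hX : X = (⋃ j, S j) ∩ Set.pi Set.univ fun i => proj i X := by
      rw [← hU]; exact hbox.2
    exact ⟨fun hs i => part2 hsub hX hs i, fun hp => part1 X hp⟩


end PaperHam

end
end

section
/- Let n ≥ 1, let H be an abstract n-hammock in an n-clat ∏_{i∈[n]} L_i, and let X be a box in H such that π_i(X) is a maximal scattered interval of L_i (maximal under inclusion among scattered intervals) for each i ∈ [n]. Then X is a maximal scattered box of H. -/
universe u v

attribute [local instance] Classical.propDecidable

noncomputable section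

namespace PaperHam

/-- Any subset of `ℚ` that is nonempty, dense in itself and without endpoints is the
range of a strictly monotone map from `ℚ`. -/
lemma exists_strictMono_into (D : Set ℚ) (hne : D.Nonempty)
    (hdense : ∀ a ∈ D, ∀ b ∈ D, a < b → ∃ c ∈ D, a < c ∧ c < b)
    (hnomax : ∀ a ∈ D, ∃ b ∈ D, a < b)
    (hnomin : ∀ a ∈ D, ∃ b ∈ D, b < a) :
    ∃ g : ℚ → ℚ, StrictMono g ∧ ∀ q, g q ∈ D := by
  haveI : Nonempty ↥D := hne.to_subtype
  haveI : DenselyOrdered ↥D := ⟨fun a b h => by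
    obtain ⟨c, hc, h1, h2⟩ := hdense a a.2 b b.2 h
    exact ⟨⟨c, hc⟩, h1, h2⟩⟩
  haveI : NoMaxOrder ↥D := ⟨fun a => by
    obtain ⟨b, hb, h⟩ := hnomax a a.2; exact ⟨⟨b, hb⟩, h⟩⟩
  haveI : NoMinOrder ↥D := ⟨fun a => by
    obtain ⟨b, hb, h⟩ := hnomin a a.2; exact ⟨⟨b, hb⟩, h⟩⟩
  obtain ⟨e⟩ := Order.iso_of_countable_dense (α := ℚ) (β := ↥D)
  refine ⟨fun q => (e q : ℚ), fun a b h => ?_, fun q => (e q).2⟩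
  exact_mod_cast e.strictMono h

/-- A nonempty open rational interval is the range of a strictly monotone map from `ℚ`. -/
lemma exists_strictMono_into_Ioo {x y : ℚ} (hxy : x < y) :
    ∃ g : ℚ → ℚ, StrictMono g ∧ ∀ q, g q ∈ Set.Ioo x y := by
  refine exists_strictMono_into _ (Set.nonempty_Ioo.mpr hxy) ?_ ?_ ?_
  · rintro a ⟨ha, -⟩ b ⟨-, hb⟩ hab
    obtain ⟨c, h1, h2⟩ := exists_between hab
    exact ⟨c, ⟨ha.trans h1, h2.trans hb⟩, h1, h2⟩
  · rintro a ⟨ha, ha'⟩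
    obtain ⟨c, h1, h2⟩ := exists_between ha'
    exact ⟨c, ⟨ha.trans h1, h2⟩, h1⟩
  · rintro a ⟨ha, ha'⟩
    obtain ⟨c, h1, h2⟩ := exists_between ha
    exact ⟨c, ⟨h1, h2.trans ha'⟩, h2⟩

/-- The union of two scattered subsets of a linear order is scattered. -/
lemma IsScatteredSet.union {α : Type*} [LinearOrder α] {A B : Set α}
    (hA : IsScatteredSet A) (hB : IsScatteredSet B) : IsScatteredSet (A ∪ B) := by
  rintro ⟨f, hf, hfAB⟩
  set D : Set ℚ := {q | f q ∈ A} with hD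
  by_cases h : ∃ a b : ℚ, a < b ∧ ∀ x y : ℚ, a ≤ x → x < y → y ≤ b →
      ∃ d ∈ D, x < d ∧ d < y
  · obtain ⟨a, b, hab, hd⟩ := h
    have key : ∃ g : ℚ → ℚ, StrictMono g ∧ ∀ q, g q ∈ D ∩ Set.Ioo a b := by
      refine exists_strictMono_into (D ∩ Set.Ioo a b) ?_ ?_ ?_ ?_
      · obtain ⟨d, hd1, hd2, hd3⟩ := hd a b le_rfl hab le_rfl
        exact ⟨d, hd1, hd2, hd3⟩
      · rintro p ⟨hp, hp1, hp2⟩ q ⟨hq, hq1, hq2⟩ hpq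
        obtain ⟨d, hd1, hd2, hd3⟩ := hd p q hp1.le hpq hq2.le
        exact ⟨d, ⟨hd1, hp1.trans hd2, hd3.trans hq2⟩, hd2, hd3⟩
      · rintro p ⟨hp, hp1, hp2⟩
        obtain ⟨d, hd1, hd2, hd3⟩ := hd p b hp1.le hp2 le_rfl
        exact ⟨d, ⟨hd1, hp1.trans hd2, hd3⟩, hd2⟩
      · rintro p ⟨hp, hp1, hp2⟩
        obtain ⟨d, hd1, hd2, hd3⟩ := hd a p le_rfl hp1 hp2.le
        exact ⟨d, ⟨hd1, hd2, hd3.trans hp2⟩, hd3⟩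
    obtain ⟨g, hg, hgmem⟩ := key
    exact hA ⟨f ∘ g, hf.comp hg, fun q => (hgmem q).1⟩
  · push_neg at h
    obtain ⟨x, y, -, hxy, -, hempty⟩ := h 0 1 one_pos
    obtain ⟨g, hg, hgmem⟩ := exists_strictMono_into_Ioo hxy
    refine hB ⟨f ∘ g, hf.comp hg, fun q => ?_⟩
    rcases hfAB (g q) with hq | hq
    · exact absurd (hempty (g q) hq (hgmem q).1) (not_le.mpr (hgmem q).2)
    · exact hq

/-- The empty set is scattered. -/
lemma isScatteredSet_empty {α : Type*} [Preorder α] : IsScatteredSet (∅ : Set α) := by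
  rintro ⟨f, -, hmem⟩
  exact (hmem 0).elim

/-- A finite union of scattered subsets of a linear order is scattered. -/
lemma isScatteredSet_iUnion {α : Type*} [LinearOrder α] :
    ∀ (k : ℕ) (A : Fin k → Set α), (∀ j, IsScatteredSet (A j)) →
      IsScatteredSet (⋃ j, A j) := by
  intro k
  induction k with
  | zero =>
    intro A _
    rw [Set.iUnion_of_empty]
    exact isScatteredSet_empty
  | succ m IH =>
    intro A hA
    have hsplit : (⋃ j, A j) = (⋃ j : Fin m, A j.castSucc) ∪ A (Fin.last m) := by
      ext z
      simp only [Set.mem_iUnion, Set.mem_union]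
      constructor
      · rintro ⟨j, hj⟩
        by_cases hjl : j = Fin.last m
        · exact Or.inr (hjl ▸ hj)
        · exact Or.inl ⟨j.castPred hjl, by rwa [Fin.castSucc_castPred]⟩
      · rintro (⟨j, hj⟩ | hj)
        · exact ⟨j.castSucc, hj⟩
        · exact ⟨Fin.last m, hj⟩
    rw [hsplit]
    exact IsScatteredSet.union (IH _ fun j => hA j.castSucc) (hA (Fin.last m))

/-- There is no map `ℚ → ∏ L i` which is componentwise monotone with values in scattered
sets and separates points on a finite set `S` of coordinates. -/
lemma no_multi {n : ℕ} {L : Fin n → Type u} [∀ i, LinearOrder (L i)]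
    (A : ∀ i, Set (L i)) (hA : ∀ i, IsScatteredSet (A i)) (S : Finset (Fin n)) :
    ¬ ∃ f : ℚ → ∀ i, L i, (∀ q i, f q i ∈ A i) ∧ (∀ i, Monotone fun q => f q i) ∧
      ∀ q q' : ℚ, q < q' → ∃ i ∈ S, f q i ≠ f q' i := by
  classical
  induction S using Finset.induction_on with
  | empty =>
    rintro ⟨f, -, -, hdist⟩
    obtain ⟨i, hi, -⟩ := hdist 0 1 one_pos
    exact absurd hi (Finset.notMem_empty i)
  | @insert a S ha IH =>
    rintro ⟨f, hmem, hmono, hdist⟩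
    by_cases hc : ∃ q q' : ℚ, q < q' ∧ f q a = f q' a
    · obtain ⟨q, q', hqq, heq⟩ := hc
      have hconst : ∀ r ∈ Set.Icc q q', f r a = f q a := fun r hr =>
        le_antisymm (heq ▸ hmono a hr.2) (hmono a hr.1)
      obtain ⟨g, hg, hgmem⟩ := exists_strictMono_into_Ioo hqq
      refine IH ⟨f ∘ g, fun r i => hmem _ i, fun i => (hmono i).comp hg.monotone,
        fun r r' hrr => ?_⟩
      obtain ⟨i, hi, hne⟩ := hdist (g r) (g r') (hg hrr)
      rcases Finset.mem_insert.mp hi with h | h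
      · exfalso
        apply hne
        subst h
        rw [hconst _ (Set.Ioo_subset_Icc_self (hgmem r)),
          hconst _ (Set.Ioo_subset_Icc_self (hgmem r'))]
      · exact ⟨i, h, hne⟩
    · push_neg at hc
      exact hA a ⟨fun q => f q a,
        fun q q' h => lt_of_le_of_ne (hmono a h.le) (hc q q' h), fun q => hmem q a⟩

/-- a box of an abstract `n`-hammock all of whose projections are maximal
scattered intervals is a maximal scattered box. -/
theorem statement7 {n : ℕ} (hn : 1 ≤ n) {L : Fin n → Type u} [∀ i, LinearOrder (L i)]
    {H : Set (∀ i, L i)} (hH : IsHammock H) {X : Set (∀ i, L i)} (hX : IsBox H X)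
    (hmax : ∀ i, (proj i X).OrdConnected ∧ IsScatteredSet (proj i X) ∧
      ∀ J : Set (L i), J.OrdConnected → IsScatteredSet J → proj i X ⊆ J →
        J = proj i X) :
    IsMSB H X := by
  classical
  obtain ⟨k, S, hsub, hHU, hprojH, -, -⟩ := hH
  refine ⟨hX, ?_, ?_⟩
  · -- `X` is scattered
    rintro ⟨f, hf, hfX⟩
    refine no_multi (fun i => proj i X) (fun i => (hmax i).2.1) Finset.univ
      ⟨f, fun q i => ⟨f q, hfX q, rfl⟩, fun i q q' h => (Pi.le_def.mp (hf.monotone h)) i, ?_⟩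
    intro q q' h
    obtain ⟨i, hi⟩ := Function.ne_iff.mp (hf h).ne
    exact ⟨i, Finset.mem_univ i, hi⟩
  · -- maximality
    intro Y hYbox hYscat hXY
    have hprojscat : ∀ i, IsScatteredSet (proj i Y) := by
      intro i
      rintro ⟨f, hf, hfY⟩
      choose y hyY hyi using fun q => hfY q
      have hyH : ∀ q : ℚ, y q ∈ H := fun q => by
        have h0 := hyY q; rw [hYbox.2] at h0; exact h0.1
      have hcover : ∀ q : ℚ, ∃ j, y q ∈ S j := fun q => by
        have h0 := hyH q; rw [hHU] at h0; exact Set.mem_iUnion.mp h0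
      set D : Fin (k + 1) → Set ℚ := fun j => {q | y q ∈ S j} with hD
      have hDscat : ∀ j, IsScatteredSet (D j) := by
        intro j
        rintro ⟨g, hg, hgD⟩
        apply hYscat
        refine ⟨fun r => Function.update (y (g 0)) i (f (g r)), fun r r' hrr => ?_, ?_⟩
        · refine lt_of_le_of_ne (Pi.le_def.mpr fun m => ?_) fun hEq => ?_
          · by_cases hm : m = i
            · subst hm
              simp only [Function.update_self]
              exact (hf (hg hrr)).le
            · simp only [Function.update_of_ne hm]
              exact le_rfl
          · have := congrFun hEq i
            simp only [Function.update_self] at this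
            exact (hf (hg hrr)).ne this
        · intro r
          rw [hYbox.2]
          constructor
          · rw [hHU]
            refine Set.mem_iUnion.mpr ⟨j, ?_⟩
            rw [hsub j]
            intro m _
            by_cases hm : m = i
            · subst hm
              simp only [Function.update_self]
              exact ⟨y (g r), hgD r, hyi (g r)⟩
            · simp only [Function.update_of_ne hm]
              exact ⟨y (g 0), hgD 0, rfl⟩
          · intro m _
            by_cases hm : m = i
            · subst hm
              simp only [Function.update_self]
              exact ⟨y (g r), hyY (g r), hyi (g r)⟩
            · simp only [Function.update_of_ne hm]
              exact ⟨y (g 0), hyY (g 0), rfl⟩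
      exact isScatteredSet_iUnion (k + 1) D hDscat
        ⟨fun q => q, strictMono_id, fun q => Set.mem_iUnion.mpr (hcover q)⟩
    have hproj_eq : (fun i => proj i Y) = fun i => proj i X :=
      funext fun i => (hmax i).2.2 (proj i Y) (hYbox.1 i) (hprojscat i)
        (Set.image_mono hXY)
    rw [hYbox.2, hproj_eq, ← hX.2]

end PaperHam

end
end

section
/- Let L be a linear order, let α be an ordinal and let p be a natural number. Then d(L) > ω·α + p if and only if there exist elements x_1, x_2, …, x_{p+2} of L with x_j <^(α) x_{j+1} for every 1 ≤ j ≤ p+1. -/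
universe u v

attribute [local instance] Classical.propDecidable

noncomputable section

namespace PaperHam

section Statement9Aux

variable {α : Type u} [LinearOrder α]

theorem hrEquiv_zero (x y : α) : hrEquiv (0 : Ordinal.{v}) x y ↔ x = y := by
  simp [hrEquiv, Ordinal.limitRecOn_zero]

theorem hrEquiv_succ (o : Ordinal.{v}) (x y : α) :
    hrEquiv (Order.succ o) x y ↔
      {s : Set α | ∃ z ∈ Set.uIcc x y, s = {w ∈ Set.uIcc x y | hrEquiv o z w}}.Finite := by
  simp only [hrEquiv, Ordinal.limitRecOn_succ]

theorem hrEquiv_limit {o : Ordinal.{v}} (ho : Order.IsSuccLimit o) (x y : α) :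
    hrEquiv o x y ↔ ∃ β < o, hrEquiv β x y := by
  conv_lhs => rw [hrEquiv, Ordinal.limitRecOn_limit _ _ _ _ ho]
  simp only [hrEquiv]
  constructor
  · rintro ⟨β, hβ, h⟩; exact ⟨β, hβ, h⟩
  · rintro ⟨β, hβ, h⟩; exact ⟨β, hβ, h⟩

structure GoodPkg (α : Type u) [LinearOrder α] (o : Ordinal.{v}) : Prop where
  refl : ∀ x : α, hrEquiv o x x
  symm : ∀ {x y : α}, hrEquiv o x y → hrEquiv o y x
  conv : ∀ {x y z : α}, hrEquiv o x y → z ∈ Set.uIcc x y → hrEquiv o x z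
  mono : ∀ β ≤ o, ∀ {x y : α}, hrEquiv β x y → hrEquiv o x y
  bt : ∀ {x y z : α}, x ≤ y → y ≤ z → hrEquiv o x y → hrEquiv o y z → hrEquiv o x z

theorem GoodPkg.trans {o : Ordinal.{v}} (G : GoodPkg α o) :
    ∀ {x y z : α}, hrEquiv o x y → hrEquiv o y z → hrEquiv o x z := by
  intro x y z hxy hyz
  rcases le_total x y with h1 | h1 <;> rcases le_total y z with h2 | h2
  · exact G.bt h1 h2 hxy hyz
  · rcases le_total x z with h3 | h3
    · exact G.conv hxy (Set.mem_uIcc.mpr (Or.inl ⟨h3, h2⟩))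
    · exact G.symm (G.conv (G.symm hyz) (Set.mem_uIcc.mpr (Or.inl ⟨h3, h1⟩)))
  · rcases le_total x z with h3 | h3
    · exact G.symm (G.conv (G.symm hyz) (Set.mem_uIcc.mpr (Or.inr ⟨h1, h3⟩)))
    · exact G.conv hxy (Set.mem_uIcc.mpr (Or.inr ⟨h2, h3⟩))
  · exact G.symm (G.bt h2 h1 (G.symm hyz) (G.symm hxy))

theorem goodPkg (o : Ordinal.{v}) : GoodPkg α o := by
  induction o using Ordinal.induction with
  | _ o IH =>
  rcases Ordinal.zero_or_succ_or_isSuccLimit o with rfl | ⟨β, rfl⟩ | hlim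
  · constructor
    · intro x; exact (hrEquiv_zero x x).mpr rfl
    · intro x y h; exact (hrEquiv_zero y x).mpr ((hrEquiv_zero x y).mp h).symm
    · intro x y z hxy hz
      rw [(hrEquiv_zero x y).mp hxy, Set.uIcc_self, Set.mem_singleton_iff] at hz
      exact (hrEquiv_zero x z).mpr (((hrEquiv_zero x y).mp hxy).trans hz.symm)
    · intro β hβ x y h
      rw [nonpos_iff_eq_zero] at hβ; subst hβ; exact h
    · intro x y z _ _ hxy hyz
      exact (hrEquiv_zero x z).mpr (((hrEquiv_zero x y).mp hxy).trans ((hrEquiv_zero y z).mp hyz))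
  · have Gβ := IH β (Order.lt_succ β)
    constructor
    · intro x
      rw [hrEquiv_succ]
      apply Set.Finite.subset (Set.finite_singleton {w ∈ Set.uIcc x x | hrEquiv β x w})
      rintro s ⟨z, hz, rfl⟩
      rw [Set.uIcc_self, Set.mem_singleton_iff] at hz
      subst hz; rfl
    · intro x y h
      rw [hrEquiv_succ] at h ⊢
      rwa [Set.uIcc_comm y x]
    · intro x y z hxy hz
      rw [hrEquiv_succ] at hxy ⊢
      have hsub : Set.uIcc x z ⊆ Set.uIcc x y := Set.uIcc_subset_uIcc Set.left_mem_uIcc hz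
      apply Set.Finite.subset (hxy.image (fun s => s ∩ Set.uIcc x z))
      rintro s ⟨z', hz', rfl⟩
      refine ⟨{w ∈ Set.uIcc x y | hrEquiv β z' w}, ⟨z', hsub hz', rfl⟩, ?_⟩
      ext w
      simp only [Set.mem_inter_iff, Set.mem_setOf_eq]
      constructor
      · rintro ⟨⟨_, hr⟩, hw⟩; exact ⟨hw, hr⟩
      · rintro ⟨hw, hr⟩; exact ⟨⟨hsub hw, hr⟩, hw⟩
    · intro γ hγ x y h
      rcases eq_or_lt_of_le hγ with rfl | hlt
      · exact h
      have hγβ : γ ≤ β := Order.lt_succ_iff.mp hlt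
      have hβxy : hrEquiv β x y := Gβ.mono γ hγβ h
      rw [hrEquiv_succ]
      apply Set.Finite.subset (Set.finite_singleton (Set.uIcc x y))
      rintro s ⟨z, hz, rfl⟩
      have hxz : hrEquiv β x z := Gβ.conv hβxy hz
      rw [Set.mem_singleton_iff]
      ext w
      simp only [Set.mem_setOf_eq]
      constructor
      · exact fun h => h.1
      · exact fun hw => ⟨hw, Gβ.trans (Gβ.symm hxz) (Gβ.conv hβxy hw)⟩
    · intro x y z h1 h2 hxy hyz
      rw [hrEquiv_succ] at hxy hyz ⊢
      have hxzI : Set.uIcc x z = Set.uIcc x y ∪ Set.uIcc y z := by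
        rw [Set.uIcc_of_le h1, Set.uIcc_of_le h2, Set.uIcc_of_le (h1.trans h2),
          Set.Icc_union_Icc_eq_Icc h1 h2]
      apply Set.Finite.subset (Set.Finite.image2 (fun s t => s ∪ t) (hxy.insert ∅) (hyz.insert ∅))
      rintro s ⟨z', hz', rfl⟩
      have claim : ∀ J : Set α,
          {w ∈ J | hrEquiv β z' w} ∈
            insert (∅ : Set α) {s : Set α | ∃ c ∈ J, s = {w ∈ J | hrEquiv β c w}} := by
        intro J
        by_cases hne : ({w ∈ J | hrEquiv β z' w} : Set α).Nonempty
        · obtain ⟨w₀, hw₀J, hr⟩ := hne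
          refine Set.mem_insert_iff.mpr (Or.inr ⟨w₀, hw₀J, ?_⟩)
          ext w
          simp only [Set.mem_setOf_eq]
          constructor
          · rintro ⟨hw, h⟩; exact ⟨hw, Gβ.trans (Gβ.symm hr) h⟩
          · rintro ⟨hw, h⟩; exact ⟨hw, Gβ.trans hr h⟩
        · rw [Set.not_nonempty_iff_eq_empty] at hne
          rw [hne]; exact Set.mem_insert _ _
      rw [Set.mem_image2]
      refine ⟨{w ∈ Set.uIcc x y | hrEquiv β z' w}, claim _,
        {w ∈ Set.uIcc y z | hrEquiv β z' w}, claim _, ?_⟩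
      ext w
      simp only [Set.mem_union, Set.mem_setOf_eq, hxzI]
      tauto
  · constructor
    · intro x
      exact (hrEquiv_limit hlim x x).mpr ⟨0, hlim.pos, (hrEquiv_zero x x).mpr rfl⟩
    · intro x y h
      obtain ⟨β, hβ, hxy⟩ := (hrEquiv_limit hlim x y).mp h
      exact (hrEquiv_limit hlim y x).mpr ⟨β, hβ, (IH β hβ).symm hxy⟩
    · intro x y z h hz
      obtain ⟨β, hβ, hxy⟩ := (hrEquiv_limit hlim x y).mp h
      exact (hrEquiv_limit hlim x z).mpr ⟨β, hβ, (IH β hβ).conv hxy hz⟩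
    · intro γ hγ x y h
      rcases eq_or_lt_of_le hγ with rfl | hlt
      · exact h
      · exact (hrEquiv_limit hlim x y).mpr ⟨γ, hlt, h⟩
    · intro x y z h1 h2 hxy hyz
      obtain ⟨β₁, hβ₁, hxy⟩ := (hrEquiv_limit hlim x y).mp hxy
      obtain ⟨β₂, hβ₂, hyz⟩ := (hrEquiv_limit hlim y z).mp hyz
      have hβ : max β₁ β₂ < o := max_lt hβ₁ hβ₂
      have G := IH _ hβ
      exact (hrEquiv_limit hlim x z).mpr
        ⟨_, hβ, G.trans (G.mono β₁ (le_max_left _ _) hxy) (G.mono β₂ (le_max_right _ _) hyz)⟩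

/-- The `∼_o`-class of `z`. -/
def hrClass (o : Ordinal.{v}) (z : α) : Set α := {w | hrEquiv o z w}

theorem hrClass_eq_iff {o : Ordinal.{v}} {z z' : α} :
    hrClass o z = hrClass o z' ↔ hrEquiv o z z' := by
  have G : GoodPkg α o := goodPkg o
  constructor
  · intro h
    have hz' : z' ∈ hrClass o z' := G.refl z'
    rw [← h] at hz'; exact hz'
  · intro h
    ext w
    exact ⟨fun hw => G.trans (G.symm h) hw, fun hw => G.trans h hw⟩

theorem hrEquiv_succ_of_classes_finite {o : Ordinal.{u}}
    (hf : (hrClasses α o).Finite) (x y : α) : hrEquiv (Order.succ o) x y := by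
  rw [hrEquiv_succ]
  apply Set.Finite.subset (hf.image (fun s => s ∩ Set.uIcc x y))
  rintro s ⟨z, hz, rfl⟩
  refine ⟨hrClass o z, ⟨z, rfl⟩, ?_⟩
  ext w
  simp only [hrClass, Set.mem_inter_iff, Set.mem_setOf_eq]
  tauto

theorem chain_of_classes {a : Ordinal.{u}} {p : ℕ}
    (h : ∃ t : Finset (Set α), ↑t ⊆ hrClasses α a ∧ t.card = p + 2) :
    ∃ x : Fin (p + 2) → α, ∀ j : Fin (p + 1),
      x j.castSucc < x j.succ ∧ ¬ hrEquiv a (x j.castSucc) (x j.succ) := by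
  obtain ⟨t, hsub, hcard⟩ := h
  have htne : t.Nonempty := Finset.card_pos.mp (by omega)
  obtain ⟨s₀, hs₀⟩ := htne
  obtain ⟨z₀, _⟩ := hsub hs₀
  haveI : Nonempty α := ⟨z₀⟩
  classical
  set rep : Set α → α := fun s =>
    if hs : ∃ z : α, s = hrClass a z then hs.choose else Classical.arbitrary α with hrepdef
  have hrep : ∀ s ∈ t, s = hrClass a (rep s) := by
    intro s hs
    obtain ⟨z, hz⟩ := hsub hs
    have hex : ∃ z : α, s = hrClass a z := ⟨z, hz⟩
    rw [hrepdef]; simp only [dif_pos hex]; exact hex.choose_spec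
  set u : Finset α := t.image rep with hu
  have hucard : u.card = p + 2 := by
    rw [hu, Finset.card_image_of_injOn, hcard]
    intro s hs s' hs' hss
    rw [hrep s hs, hrep s' hs', hss]
  have hne : ∀ w ∈ u, ∀ w' ∈ u, hrEquiv a w w' → w = w' := by
    intro w hw w' hw' hww
    obtain ⟨s, hs, rfl⟩ := Finset.mem_image.mp hw
    obtain ⟨s', hs', rfl⟩ := Finset.mem_image.mp hw'
    have hss : s = s' := by rw [hrep s hs, hrep s' hs', hrClass_eq_iff.mpr hww]
    rw [hss]
  set e := u.orderIsoOfFin hucard with he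
  refine ⟨fun j => (e j : α), fun j => ?_⟩
  have hlt : (e j.castSucc : α) < (e j.succ : α) :=
    Subtype.coe_lt_coe.mpr (e.strictMono (Fin.castSucc_lt_succ (i := j)))
  refine ⟨hlt, fun hequiv => ?_⟩
  exact hlt.ne (hne _ (e j.castSucc).2 _ (e j.succ).2 hequiv)

theorem classes_of_chain {a : Ordinal.{u}} {p : ℕ} (x : Fin (p + 2) → α)
    (hx : ∀ j : Fin (p + 1), x j.castSucc < x j.succ ∧ ¬ hrEquiv a (x j.castSucc) (x j.succ)) :
    ∃ t : Finset (Set α), ↑t ⊆ hrClasses α a ∧ t.card = p + 2 := by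
  have G : GoodPkg α a := goodPkg a
  have hmono : StrictMono x := Fin.strictMono_iff_lt_succ.mpr fun j => (hx j).1
  have hpair : ∀ i j : Fin (p + 2), i < j → ¬ hrEquiv a (x i) (x j) := by
    intro i j hij hequiv
    have hij' : (i : ℕ) < (j : ℕ) := hij
    have hjle : (j : ℕ) ≤ p + 1 := Nat.lt_succ_iff.mp j.2
    set i' : Fin (p + 1) := ⟨(i : ℕ), by omega⟩ with hi'
    have hcast : i'.castSucc = i := by ext; rfl
    have hsucc_le : i'.succ ≤ j := by
      rw [Fin.le_def]; simp [hi', Fin.val_succ]; omega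
    have hmem : x i'.succ ∈ Set.uIcc (x i) (x j) := by
      rw [Set.uIcc_of_le (hmono hij).le]
      refine ⟨?_, hmono.monotone hsucc_le⟩
      rw [← hcast]
      exact (hmono (Fin.castSucc_lt_succ (i := i'))).le
    have hconv := G.conv hequiv hmem
    rw [← hcast] at hconv
    exact (hx i').2 hconv
  have hinj : Function.Injective fun j : Fin (p + 2) => hrClass a (x j) := by
    intro i j hijc
    by_contra hijne
    rcases lt_or_gt_of_ne hijne with h | h
    · exact hpair i j h (hrClass_eq_iff.mp hijc)
    · exact hpair j i h (hrClass_eq_iff.mp hijc.symm)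
  refine ⟨Finset.univ.image fun j : Fin (p + 2) => hrClass a (x j), ?_, ?_⟩
  · intro s hs
    simp only [Finset.coe_image, Set.mem_image] at hs
    obtain ⟨j, _, rfl⟩ := hs
    exact ⟨x j, rfl⟩
  · rw [Finset.card_image_of_injective _ hinj, Finset.card_univ, Fintype.card_fin]

theorem omega_arith_lt {a r : Ordinal.{u}} (h : a < r) {q : Ordinal.{u}} (hq : q < Ordinal.omega0)
    (q' : Ordinal.{u}) : Ordinal.omega0 * a + q < Ordinal.omega0 * r + q' :=
  calc Ordinal.omega0 * a + q < Ordinal.omega0 * a + Ordinal.omega0 := (add_lt_add_iff_left _).mpr hq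
    _ = Ordinal.omega0 * Order.succ a := (Ordinal.mul_succ _ _).symm
    _ ≤ Ordinal.omega0 * r := mul_le_mul_right (Order.succ_le_of_lt h) _
    _ ≤ Ordinal.omega0 * r + q' := le_self_add

end Statement9Aux

/-- `d(L) > ω·a + p` iff there is a chain
`x₁ <⁽ᵃ⁾ x₂ <⁽ᵃ⁾ ⋯ <⁽ᵃ⁾ x_{p+2}` in `L`. -/
theorem statement9 {α : Type u} [LinearOrder α] (a : Ordinal.{u}) (p : ℕ) :
    ((((Ordinal.omega0.{u} * a + (p : Ordinal.{u}) : Ordinal.{u}) : WithTop Ordinal.{u})) :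
        WithBot (WithTop Ordinal.{u})) < density α ↔
      ∃ x : Fin (p + 2) → α, ∀ j : Fin (p + 1),
        x j.castSucc < x j.succ ∧ ¬ hrEquiv a (x j.castSucc) (x j.succ) := by
  by_cases hS : ∃ o : Ordinal.{u}, (hrClasses α o).Finite
  · by_cases hα : Nonempty α
    · have hd : density α =
          ((((Ordinal.omega0.{u} * sInf {o : Ordinal.{u} | (hrClasses α o).Finite} +
            (((hrClasses α (sInf {o : Ordinal.{u} | (hrClasses α o).Finite})).ncard - 1 : ℕ) :
              Ordinal.{u}) : Ordinal.{u}) : WithTop Ordinal.{u})) :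
                WithBot (WithTop Ordinal.{u})) := by
        rw [density, dif_pos hS, if_pos hα]
      set r : Ordinal.{u} := sInf {o : Ordinal.{u} | (hrClasses α o).Finite} with hrdef
      set n : ℕ := (hrClasses α r).ncard with hndef
      have hSne : Set.Nonempty {o : Ordinal.{u} | (hrClasses α o).Finite} := hS
      have hrS : (hrClasses α r).Finite := csInf_mem hSne
      have hn1 : 1 ≤ n := by
        have hne : (hrClasses α r).Nonempty := ⟨{w | hrEquiv r hα.some w}, hα.some, rfl⟩
        have := (Set.ncard_pos hrS).mpr hne
        omega
      rw [hd, WithBot.coe_lt_coe, WithTop.coe_lt_coe]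
      rcases lt_trichotomy a r with hlt | heq | hgt
      · refine iff_of_true (omega_arith_lt hlt (Ordinal.nat_lt_omega0 p) _) ?_
        have hinf : (hrClasses α a).Infinite := fun hf =>
          absurd (csInf_le' (s := {o : Ordinal.{u} | (hrClasses α o).Finite}) hf)
            (not_le.mpr hlt)
        obtain ⟨t, hsub, hcard⟩ := hinf.exists_subset_card_eq (p + 2)
        exact chain_of_classes ⟨t, hsub, hcard⟩
      · subst heq
        rw [add_lt_add_iff_left, Nat.cast_lt]
        constructor
        · intro hpn
          have h2n : p + 2 ≤ n := by omega
          obtain ⟨t, hsub, htcard⟩ := Set.exists_subset_card_eq h2n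
          have htfin : t.Finite := hrS.subset hsub
          refine chain_of_classes ⟨htfin.toFinset, ?_, ?_⟩
          · rwa [Set.Finite.coe_toFinset]
          · rw [← Set.ncard_eq_toFinset_card _ htfin, htcard]
        · rintro ⟨x, hx⟩
          obtain ⟨t, hsub, htcard⟩ := classes_of_chain x hx
          have hle : (↑t : Set (Set α)).ncard ≤ n := Set.ncard_le_ncard hsub hrS
          rw [Set.ncard_coe_finset, htcard] at hle
          omega
      · refine iff_of_false (not_lt.mpr (omega_arith_lt hgt
          (Ordinal.nat_lt_omega0 (n - 1)) _).le) ?_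
        rintro ⟨x, hx⟩
        have hcol := hrEquiv_succ_of_classes_finite hrS
          (x (0 : Fin (p + 1)).castSucc) (x (0 : Fin (p + 1)).succ)
        exact (hx 0).2 ((goodPkg a).mono _ (Order.succ_le_of_lt hgt) hcol)
    · have hd : density α = ⊥ := by rw [density, dif_pos hS, if_neg hα]
      rw [hd]
      refine iff_of_false (by simp) ?_
      rintro ⟨x, _⟩
      exact hα ⟨x 0⟩
  · have hd : density α = ((⊤ : WithTop Ordinal.{u}) : WithBot (WithTop Ordinal.{u})) := by
      rw [density, dif_neg hS]
    rw [hd]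
    refine iff_of_true (WithBot.coe_lt_coe.mpr (WithTop.coe_lt_top _)) ?_
    have hinf : (hrClasses α a).Infinite := fun hf => hS ⟨a, hf⟩
    obtain ⟨t, hsub, hcard⟩ := hinf.exists_subset_card_eq (p + 2)
    exact chain_of_classes ⟨t, hsub, hcard⟩


end PaperHam

end
end

section
/- Suppose L and L_- are nonempty linear orders such that L_- is order-isomorphic to a prefix of L·ω*. Then L_- has a prefix order-isomorphic to L·ω*. -/
universe u v

attribute [local instance] Classical.propDecidable

noncomputable section

namespace PaperHam

section Statement13Aux

variable {α : Type u} [LinearOrder α]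

/-- The first coordinate of an element of `L·ω*`, as a natural number. -/
def natFst (x : Lex (ℕᵒᵈ × α)) : ℕ := OrderDual.ofDual (ofLex x).1

lemma lex_le_iff (x y : Lex (ℕᵒᵈ × α)) :
    x ≤ y ↔ natFst y < natFst x ∨ natFst x = natFst y ∧ (ofLex x).2 ≤ (ofLex y).2 := by
  rw [show x = toLex (ofLex x) from rfl, show y = toLex (ofLex y) from rfl, Prod.Lex.le_iff]
  constructor
  · rintro (h | ⟨h1, h2⟩)
    · exact Or.inl h
    · exact Or.inr ⟨congrArg OrderDual.ofDual h1, h2⟩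
  · rintro (h | ⟨h1, h2⟩)
    · exact Or.inl h
    · exact Or.inr ⟨congrArg OrderDual.toDual h1, h2⟩

/-- The tail of `L·ω*` past position `n`. -/
def tailSet (n : ℕ) : Set (Lex (ℕᵒᵈ × α)) := {x | n < natFst x}

lemma tailSet_lower (n : ℕ) : IsLowerSet (tailSet (α := α) n) := by
  intro y x hxy hy
  rcases (lex_le_iff x y).1 hxy with h | ⟨h, _⟩
  · exact lt_trans hy h
  · simpa [tailSet, h] using hy

def tailEquiv (n : ℕ) : Lex (ℕᵒᵈ × α) ≃ ↥(tailSet (α := α) n) where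
  toFun z := ⟨toLex (OrderDual.toDual (natFst z + n + 1), (ofLex z).2), by
    simp [tailSet, natFst]⟩
  invFun x := toLex (OrderDual.toDual (natFst x.1 - (n + 1)), (ofLex x.1).2)
  left_inv z := by
    simp only [natFst, ofLex_toLex, OrderDual.ofDual_toDual]
    have h : OrderDual.ofDual (ofLex z).1 + n + 1 - (n + 1) =
        OrderDual.ofDual (ofLex z).1 := by omega
    rw [h]
    rfl
  right_inv x := by
    have hx := x.2
    simp only [tailSet, Set.mem_setOf_eq] at hx
    apply Subtype.ext
    simp only [natFst, ofLex_toLex, OrderDual.ofDual_toDual]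
    simp only [natFst] at hx
    have h : OrderDual.ofDual (ofLex x.1).1 - (n + 1) + n + 1 =
        OrderDual.ofDual (ofLex x.1).1 := by omega
    rw [h]
    rfl

omit [LinearOrder α] in
lemma natFst_tailEquiv (n : ℕ) (z : Lex (ℕᵒᵈ × α)) :
    natFst ((tailEquiv n z : ↥(tailSet (α := α) n)) : Lex (ℕᵒᵈ × α)) = natFst z + n + 1 := rfl

def tailOrderIso (n : ℕ) : Lex (ℕᵒᵈ × α) ≃o ↥(tailSet (α := α) n) :=
  (tailEquiv n).toOrderIso
    (by
      intro z w hzw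
      rw [← Subtype.coe_le_coe, lex_le_iff]
      rcases (lex_le_iff z w).1 hzw with h | ⟨h1, h2⟩
      · left; simp only [natFst_tailEquiv]; omega
      · right; exact ⟨by simp only [natFst_tailEquiv]; omega, h2⟩)
    (by
      intro x y hxy
      have hx := x.2; have hy := y.2
      simp only [tailSet, Set.mem_setOf_eq] at hx hy
      rw [lex_le_iff]
      rcases (lex_le_iff x.1 y.1).1 (Subtype.coe_le_coe.2 hxy) with h | ⟨h1, h2⟩
      · left
        show natFst y.1 - (n + 1) < natFst x.1 - (n + 1)
        omega
      · right
        exact ⟨by show natFst x.1 - (n + 1) = natFst y.1 - (n + 1); omega, h2⟩)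

end Statement13Aux

/-- if a nonempty linear order `β` is isomorphic to a prefix of `α · ω*`
(here `Lex (ℕᵒᵈ × α)`), then `β` has a prefix isomorphic to `α · ω*`. -/
theorem statement13 {α β : Type u} [LinearOrder α] [LinearOrder β]
    [Nonempty α] [Nonempty β]
    (h : ∃ A : Set (Lex (ℕᵒᵈ × α)), IsLowerSet A ∧ Nonempty (β ≃o ↥A)) :
    ∃ B : Set β, IsLowerSet B ∧ Nonempty (↥B ≃o Lex (ℕᵒᵈ × α)) := by
  obtain ⟨A, hA, ⟨e⟩⟩ := h
  set a0 : ↥A := e (Classical.arbitrary β) with ha0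
  set n : ℕ := natFst (a0 : Lex (ℕᵒᵈ × α)) with hn
  have hSA : tailSet (α := α) n ⊆ A := by
    intro x hx
    have hxa : x ≤ (a0 : Lex (ℕᵒᵈ × α)) := (lex_le_iff x _).2 (Or.inl hx)
    exact hA hxa a0.2
  set B : Set β := {b | ((e b : ↥A) : Lex (ℕᵒᵈ × α)) ∈ tailSet (α := α) n} with hB
  refine ⟨B, ?_, ?_⟩
  · intro b b' hle hb
    exact tailSet_lower n (Subtype.coe_le_coe.2 (e.le_iff_le.2 hle)) hb
  · refine ⟨(OrderIso.trans ?_ (tailOrderIso (α := α) n).symm : ↥B ≃o Lex (ℕᵒᵈ × α))⟩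
    exact
      { toFun := fun b => ⟨((e b.1 : ↥A) : Lex (ℕᵒᵈ × α)), b.2⟩
        invFun := fun s => ⟨e.symm ⟨s.1, hSA s.2⟩, by
          show ((e (e.symm ⟨s.1, hSA s.2⟩) : ↥A) : Lex (ℕᵒᵈ × α)) ∈ tailSet n
          rw [e.apply_symm_apply]; exact s.2⟩
        left_inv := fun b => by
          apply Subtype.ext
          simp only
          rw [show (⟨((e b.1 : ↥A) : Lex (ℕᵒᵈ × α)), hSA b.2⟩ : ↥A) = e b.1 from rfl,
            e.symm_apply_apply]
        right_inv := fun s => by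
          apply Subtype.ext
          show ((e (e.symm ⟨s.1, hSA s.2⟩) : ↥A) : Lex (ℕᵒᵈ × α)) = s.1
          rw [e.apply_symm_apply]
        map_rel_iff' := by
          intro a b
          show ((e a.1 : ↥A) : Lex (ℕᵒᵈ × α)) ≤ ((e b.1 : ↥A) : Lex (ℕᵒᵈ × α)) ↔ a ≤ b
          rw [Subtype.coe_le_coe, e.le_iff_le]
          exact Subtype.coe_le_coe }


end PaperHam

end
end
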